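/- arXiv:2106.04309 — 4 statements merged into one kernel-verified Lean document; each statement's English description precedes it below -/
import Mathlib

section
/- Let q ∈ {3,7,11,19,43,67,163} and let p ≡ 1 (mod 4) be a prime with (-q/p) = 1. Then there exist positive integers u, v with p = u² - q v². -/
/-!
An element of `ℤ[√d]` whose norm is `±s` for a prime `s` is prime, so it (or its conjugate) can be
divided out of any element whose norm is divisible by `s`. For an odd prime `r` with `q` a square
mod `r` and `r² > q`, pick an even `x` with `x² ≡ q (mod r)` and `|x| < r`: then
`N(x + √q) = x² - q = ±r m` with `m` odd and `m < r`. By strong induction every prime factor of `m`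
is `±` a norm, and dividing them all out of `x + √q` leaves an element of norm `±r`. The finitely
many odd primes with `r² ≤ q` are covered by explicit elements. For `p ≡ 1 (mod 4)` the symbol
`(-q/p) = 1` makes `q` a square mod `p`, and the norm is `+p` rather than `-p` because
`u² - q v² ≡ u² + v² (mod 4)` is never `3`.
-/

theorem ZMod.exists_even_abs_lt_intCast_eq {r : ℕ} (hr : Odd r) (y : ZMod r) :
    ∃ x : ℤ, Even x ∧ |x| < r ∧ (x : ZMod r) = y := by
  have : NeZero r := ⟨hr.pos.ne'⟩
  have hy : (y.val : ℤ) < r := by exact_mod_cast y.val_lt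
  rcases Int.even_or_odd (y.val : ℤ) with h | h
  · exact ⟨y.val, h, by rw [abs_of_nonneg (by positivity)]; exact hy, by simp⟩
  · refine ⟨y.val - r, h.sub_odd (by exact_mod_cast hr), ?_, by simp⟩
    have := Int.odd_iff.mp h
    rw [abs_lt]; constructor <;> omega

theorem ZMod.isSquare_intCast_of_dvd_mul_self_sub {s : ℕ} {x d : ℤ} (h : (s : ℤ) ∣ x * x - d) :
    IsSquare (d : ZMod s) := by
  have := (ZMod.intCast_zmod_eq_zero_iff_dvd _ s).mpr h
  push_cast at this
  exact ⟨x, by linear_combination -this⟩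

theorem exists_natAbs_mul_self_sub_eq_mul {d : ℤ} {r : ℕ} (hr : Odd r) (hd : 0 < d)
    (hdo : Odd d) (hdr : d < r * r) (hsq : IsSquare (d : ZMod r)) :
    ∃ x : ℤ, ∃ m : ℕ, Odd m ∧ m < r ∧ (x * x - d).natAbs = r * m := by
  obtain ⟨y, hy⟩ := hsq
  obtain ⟨x, hxe, hxr, rfl⟩ := ZMod.exists_even_abs_lt_intCast_eq hr y
  have hrN : (r : ℤ) ∣ x * x - d :=
    (ZMod.intCast_zmod_eq_zero_iff_dvd _ r).mp (by push_cast; rw [hy]; ring)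
  obtain ⟨m, hm⟩ := Int.natAbs_dvd_natAbs.mpr hrN
  rw [Int.natAbs_natCast] at hm
  have hNodd : Odd (x * x - d) := (hxe.mul_right x).sub_odd hdo
  have hNlt : |x * x - d| < r * r := by
    have : x * x < r * r := by nlinarith [abs_lt.mp hxr, abs_nonneg x]
    rw [abs_lt]; constructor <;> nlinarith
  refine ⟨x, m, (Nat.odd_mul.mp (hm ▸ Int.natAbs_odd.mpr hNodd)).2, ?_, hm⟩
  rw [Int.abs_eq_natAbs, hm] at hNlt
  exact Nat.lt_of_mul_lt_mul_left (by exact_mod_cast hNlt)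

namespace Zsqrtd

variable {d : ℤ}

theorem dvd_iff_intCast_norm_dvd_mul_star {β γ : ℤ√d} (hβ : β.norm ≠ 0) :
    β ∣ γ ↔ (β.norm : ℤ√d) ∣ γ * star β := by
  constructor
  · rintro ⟨δ, rfl⟩
    exact ⟨δ, by rw [norm_eq_mul_conj]; ring⟩
  · rintro ⟨δ, hδ⟩
    have h : (β.norm : ℤ√d) * γ = β.norm * (β * δ) := by
      rw [norm_eq_mul_conj] at hδ ⊢
      linear_combination β * hδ
    refine ⟨δ, ?_⟩
    ext
    · simpa only [re_smul, mul_right_inj' hβ] using congrArg re h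
    · simpa only [im_smul, mul_right_inj' hβ] using congrArg im h

variable {s : ℕ}

theorem natCast_dvd_norm_of_natAbs_norm_eq {β : ℤ√d} (hβ : β.norm.natAbs = s) :
    (s : ℤ) ∣ β.norm := by
  rw [← hβ]; exact Int.natAbs_dvd_self

theorem norm_dvd_natCast_of_natAbs_norm_eq {β : ℤ√d} (hβ : β.norm.natAbs = s) :
    β.norm ∣ s := by
  rw [← hβ]; exact Int.dvd_natAbs_self

theorem not_dvd_im_of_natAbs_norm_eq_prime {β : ℤ√d} (hs : s.Prime)
    (hβ : β.norm.natAbs = s) : ¬ (s : ℤ) ∣ β.im := by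
  have hsp : Prime (s : ℤ) := Nat.prime_iff_prime_int.mp hs
  intro him
  have hre : (s : ℤ) ∣ β.re := by
    refine hsp.dvd_of_dvd_pow (n := 2) ?_
    have : β.re ^ 2 = β.norm + d * β.im * β.im := by rw [norm_def]; ring
    rw [this]
    exact dvd_add (natCast_dvd_norm_of_natAbs_norm_eq hβ) ((him.mul_left _).mul_right _)
  have h : (s : ℤ) * s ∣ β.norm := by
    rw [norm_def]
    exact dvd_sub (mul_dvd_mul hre hre) (mul_dvd_mul (him.mul_left d) him)
  have := Int.natAbs_dvd_natAbs.mpr h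
  rw [hβ, Int.natAbs_mul, Int.natAbs_natCast] at this
  nlinarith [Nat.le_of_dvd hs.pos this, hs.two_le]

theorem dvd_iff_dvd_im_mul_star {β : ℤ√d} (hs : s.Prime) (hβ : β.norm.natAbs = s) (γ : ℤ√d) :
    β ∣ γ ↔ (s : ℤ) ∣ (γ * star β).im := by
  have hsβ := natCast_dvd_norm_of_natAbs_norm_eq hβ
  have hβs := norm_dvd_natCast_of_natAbs_norm_eq hβ
  have hβ0 : β.norm ≠ 0 := by
    rintro h; rw [h] at hβ; exact hs.ne_zero hβ.symm
  rw [dvd_iff_intCast_norm_dvd_mul_star hβ0, intCast_dvd]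
  constructor
  · exact fun h => hsβ.trans h.2
  · intro him
    set w := γ * star β
    -- `w * β = norm β * γ`, whose imaginary part gives `s ∣ w.re * β.im`
    have hwre : (s : ℤ) ∣ w.re * β.im := by
      have : w.re * β.im = β.norm * γ.im - w.im * β.re := by
        simp only [w, re_mul, im_mul, re_star, im_star, norm_def]; ring
      rw [this]
      exact dvd_sub (hsβ.mul_right _) (him.mul_right _)
    exact ⟨hβs.trans ((Nat.prime_iff_prime_int.mp hs).dvd_or_dvd hwre |>.resolve_right
      (not_dvd_im_of_natAbs_norm_eq_prime hs hβ)), hβs.trans him⟩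

theorem prime_of_natAbs_norm_eq_prime {β : ℤ√d} (hs : s.Prime) (hβ : β.norm.natAbs = s) :
    Prime β := by
  refine ⟨?_, ?_, fun a b hab => ?_⟩
  · rintro rfl
    simp only [norm_zero, Int.natAbs_zero] at hβ
    exact hs.ne_zero hβ.symm
  · rw [← norm_eq_one_iff, hβ]; exact hs.ne_one
  · simp only [dvd_iff_dvd_im_mul_star hs hβ] at hab ⊢
    have h : (a * star β).im * (b * star β).im
        = β.norm * a.im * b.im - β.im * (a * b * star β).im := by
      simp only [re_mul, im_mul, re_star, im_star, norm_def]; ring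
    refine (Nat.prime_iff_prime_int.mp hs).dvd_or_dvd ?_
    rw [h]
    exact dvd_sub ((natCast_dvd_norm_of_natAbs_norm_eq hβ).mul_right _ |>.mul_right _)
      (hab.mul_left _)

theorem exists_dvd_natAbs_norm_eq_of_mul_prime {α β : ℤ√d} {t : ℕ} (hs : s.Prime)
    (hβ : β.norm.natAbs = s) (hα : α.norm.natAbs = t * s) :
    ∃ γ, γ ∣ α ∧ γ.norm.natAbs = t := by
  have hsα : (s : ℤ) ∣ α.norm := Int.natAbs_dvd_natAbs.mp (by simp [hα])
  have hβα : β ∣ α * star α := by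
    rw [← norm_eq_mul_conj]
    refine (dvd_mul_right β (star β)).trans ?_
    rw [← norm_eq_mul_conj, intCast_dvd_intCast]
    exact (norm_dvd_natCast_of_natAbs_norm_eq hβ).trans hsα
  obtain ⟨δ, hδα, hδ⟩ : ∃ δ, δ ∣ α ∧ δ.norm.natAbs = s := by
    rcases (prime_of_natAbs_norm_eq_prime hs hβ).dvd_or_dvd hβα with h | h
    · exact ⟨β, h, hβ⟩
    · refine ⟨star β, ?_, by rwa [norm_conj]⟩
      simpa only [starRingEnd_apply, star_star] using map_dvd (starRingEnd _) h
  obtain ⟨γ, rfl⟩ := hδα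
  refine ⟨γ, dvd_mul_left γ δ, ?_⟩
  rw [norm_mul, Int.natAbs_mul, hδ, mul_comm] at hα
  exact Nat.eq_of_mul_eq_mul_right hs.pos hα

theorem exists_dvd_natAbs_norm_eq_of_mul {α : ℤ√d} {t m : ℕ} (hm : m ≠ 0)
    (hα : α.norm.natAbs = t * m) (hrep : ∀ s, s.Prime → s ∣ m → ∃ β : ℤ√d, β.norm.natAbs = s) :
    ∃ γ, γ ∣ α ∧ γ.norm.natAbs = t := by
  induction m using Nat.recOnMul generalizing t α with
  | zero => exact absurd rfl hm
  | one => exact ⟨α, dvd_rfl, by simpa using hα⟩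
  | prime s hs =>
    obtain ⟨β, hβ⟩ := hrep s hs dvd_rfl
    exact exists_dvd_natAbs_norm_eq_of_mul_prime hs hβ hα
  | mul a b iha ihb =>
    obtain ⟨ha, hb⟩ := mul_ne_zero_iff.mp hm
    obtain ⟨γ, hγα, hγ⟩ := ihb hb (t := t * a) (by rw [hα, mul_assoc])
      fun s hs hsb => hrep s hs (hsb.mul_left a)
    obtain ⟨γ', hγ'γ, hγ'⟩ := iha ha hγ fun s hs hsa => hrep s hs (hsa.mul_right b)
    exact ⟨γ', hγ'γ.trans hγα, hγ'⟩

theorem exists_natAbs_norm_eq_of_isSquare (hd : 0 < d) (hdo : Odd d)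
    (hsmall : ∀ r : ℕ, r.Prime → Odd r → (r * r : ℤ) ≤ d → IsSquare (d : ZMod r) →
      ∃ β : ℤ√d, β.norm.natAbs = r)
    {r : ℕ} (hr : r.Prime) (hro : Odd r) (hsq : IsSquare (d : ZMod r)) :
    ∃ β : ℤ√d, β.norm.natAbs = r := by
  induction r using Nat.strong_induction_on with
  | _ r ih =>
    rcases le_or_gt ((r : ℤ) * r) d with hrd | hdr
    · exact hsmall r hr hro hrd hsq
    obtain ⟨x, m, hmo, hmr, hN⟩ := exists_natAbs_mul_self_sub_eq_mul hro hd hdo hdr hsq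
    have hx : (⟨x, 1⟩ : ℤ√d).norm.natAbs = r * m := by rw [norm_def, ← hN]; ring_nf
    obtain ⟨γ, -, hγ⟩ := exists_dvd_natAbs_norm_eq_of_mul hmo.pos.ne' hx fun s hs hsm =>
      ih s ((Nat.le_of_dvd hmo.pos hsm).trans_lt hmr) hs (hmo.of_dvd_nat hsm)
        (ZMod.isSquare_intCast_of_dvd_mul_self_sub
          (Int.natCast_dvd.mpr (hN ▸ hsm.mul_left r)))
    exact ⟨γ, hγ⟩

theorem norm_emod_four_ne_three (hd : d % 4 = 3) (β : ℤ√d) : β.norm % 4 ≠ 3 := by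
  intro h
  have hcast : ∀ n : ℤ, n % 4 = 3 → (n : ZMod 4) = 3 := fun n hn => by
    rw [← ZMod.intCast_mod, Nat.cast_ofNat, hn]; rfl
  have key : ∀ a b : ZMod 4, a * a - 3 * b * b ≠ 3 := by decide
  have hN := hcast _ h
  rw [norm_def] at hN
  push_cast at hN
  rw [hcast d hd] at hN
  exact key _ _ hN

theorem exists_pos_of_norm_eq_prime (hd : 0 ≤ d) {p : ℕ} (hp : p.Prime)
    {β : ℤ√d} (hβ : β.norm = p) : ∃ u v : ℤ, 0 < u ∧ 0 < v ∧ (p : ℤ) = u ^ 2 - d * v ^ 2 := by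
  refine ⟨|β.re|, |β.im|, abs_pos.mpr ?_, abs_pos.mpr ?_, by
    rw [sq_abs, sq_abs, ← hβ, norm_def]; ring⟩
  · intro h0
    rw [norm_def, h0] at hβ
    nlinarith [mul_nonneg hd (mul_self_nonneg β.im), hp.pos]
  · intro h0
    rw [norm_def, h0, mul_zero, sub_zero] at hβ
    have hsq : β.re.natAbs * β.re.natAbs = p := by exact_mod_cast Int.natAbs_mul_self.trans hβ
    have h1 : β.re.natAbs ≠ 1 := fun h => hp.ne_one (by rw [← hsq, h])
    exact Nat.not_prime_mul h1 h1 (hsq ▸ hp)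

end Zsqrtd

theorem isSquare_of_legendreSym_neg_eq_one {p : ℕ} [Fact p.Prime] {a : ℤ} (hp : p % 4 = 1)
    (h : legendreSym p (-a) = 1) : IsSquare (a : ZMod p) := by
  rw [legendreSym.at_neg (by omega), ZMod.χ₄_nat_one_mod_four hp, one_mul] at h
  refine (legendreSym.eq_one_iff p fun h0 => ?_).mp h
  rw [(legendreSym.eq_zero_iff p a).mpr h0] at h
  exact zero_ne_one h

theorem exists_natAbs_norm_eq_of_mul_self_le {q : ℕ}
    (hq : q ∈ ({3, 7, 11, 19, 43, 67, 163} : Set ℕ)) (r : ℕ) (hr : r.Prime) (hro : Odd r)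
    (hrq : (r * r : ℤ) ≤ q) (hsq : IsSquare ((q : ℤ) : ZMod r)) :
    ∃ β : ℤ√(q : ℤ), β.norm.natAbs = r := by
  simp only [Set.mem_insert_iff, Set.mem_singleton_iff] at hq
  have hr12 : r ≤ 12 := by
    have : q ≤ 163 := by omega
    nlinarith
  interval_cases r <;> rcases hq with rfl | rfl | rfl | rfl | rfl | rfl | rfl <;>
    first
    | (norm_num at hr; done)
    | (exfalso; revert hro; decide)
    | (norm_num at hrq; done)
    | (exfalso; revert hsq; decide)
    | skip
  -- the remaining `(q, r)`: `(19, 3), (43, 3), (67, 3), (163, 3), (67, 7), (163, 7), (163, 11)`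
  · exact ⟨⟨4, 1⟩, by decide⟩
  · exact ⟨⟨13, 2⟩, by decide⟩
  · exact ⟨⟨8, 1⟩, by decide⟩
  · exact ⟨⟨932, 73⟩, by decide⟩
  · exact ⟨⟨90, 11⟩, by decide⟩
  · exact ⟨⟨51, 4⟩, by decide⟩
  · exact ⟨⟨383, 30⟩, by decide⟩

/-- Let q ∈ {3,7,11,19,43,67,163} and p ≡ 1 (mod 4) a prime with (-q/p) = 1.
Then there exist positive integers u, v with p = u² - q v². -/
theorem exists_rep (q p : ℕ) [Fact p.Prime]
    (hq : q ∈ ({3, 7, 11, 19, 43, 67, 163} : Set ℕ))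
    (hp : p % 4 = 1) (hleg : legendreSym p (-(q : ℤ)) = 1) :
    ∃ u v : ℤ, 0 < u ∧ 0 < v ∧ (p : ℤ) = u ^ 2 - q * v ^ 2 := by
  have hp' : p.Prime := Fact.out
  have hq4 : (q : ℤ) % 4 = 3 := by
    simp only [Set.mem_insert_iff, Set.mem_singleton_iff] at hq
    omega
  obtain ⟨β, hβ⟩ := Zsqrtd.exists_natAbs_norm_eq_of_isSquare (by omega)
    (Int.odd_iff.mpr (by omega)) (exists_natAbs_norm_eq_of_mul_self_le hq) hp'
    (Nat.odd_iff.mpr (by omega)) (isSquare_of_legendreSym_neg_eq_one hp hleg)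
  have hnorm : β.norm = p := (Int.natAbs_eq_iff.mp hβ).resolve_right fun h =>
    Zsqrtd.norm_emod_four_ne_three hq4 β (by omega)
  exact Zsqrtd.exists_pos_of_norm_eq_prime (by omega) hp' hnorm
end

section
/- Let K be a number field, L a quadratic extension of K with nontrivial automorphism ψ, and 𝔭 a prime of O_K unramified in L. If β ∈ O_L satisfies β ≡ ψ(β) (mod 𝔭O_L), then there exists β' ∈ O_K with β' ≡ β (mod 𝔭O_L). -/
open NumberField Module

/-!
Since `Gal(L/K)` has order 2, `ψ` is an involution whose fixed points in `𝓞 L` are exactly `𝓞 K`;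
hence `β + ψ β` and `β ψ β` lie in `𝓞 K`. If `2 ∉ 𝔭`, then `β ≡ (β + ψ β) / 2`. If `2 ∈ 𝔭`,
the residue field `𝓞 K / 𝔭` is finite of characteristic 2, so `β ψ β ≡ m²` for some `m ∈ 𝓞 K`;
then `(m - β)² ≡ m² - β ψ β ≡ 0`, and `𝔭 𝓞 L` is a radical ideal because `𝔭` is unramified,
so `β ≡ m`.
-/

section Descent

variable {A B : Type*} [CommRing A] [CommRing B] [Algebra A B] {𝔭 : Ideal A} {x y : B}

theorem exists_algebraMap_sub_mem_of_two_notMem [𝔭.IsMaximal] (h2 : (2 : A) ∉ 𝔭) {t : A}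
    (ht : algebraMap A B t = x + y) (hxy : x - y ∈ 𝔭.map (algebraMap A B)) :
    ∃ a : A, algebraMap A B a - x ∈ 𝔭.map (algebraMap A B) := by
  obtain ⟨c, i, hi, hci⟩ := Ideal.IsMaximal.exists_inv ‹_› h2
  refine ⟨c * t, ?_⟩
  have key : algebraMap A B (c * t) - x
      = -(algebraMap A B c * (x - y) + algebraMap A B i * x) := by
    have hci' := congrArg (algebraMap A B) hci
    rw [map_add, map_mul, map_ofNat, map_one] at hci'
    rw [map_mul, ht]
    linear_combination x * hci'
  rw [key]
  exact neg_mem (add_mem (Ideal.mul_mem_left _ _ hxy)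
    (Ideal.mul_mem_right _ _ (Ideal.mem_map_of_mem _ hi)))

theorem exists_algebraMap_sub_mem_of_two_mem (h2 : (2 : A) ∈ 𝔭)
    (hsq : ∀ x : A ⧸ 𝔭, IsSquare x) (hrad : (𝔭.map (algebraMap A B)).IsRadical) {n : A}
    (hn : algebraMap A B n = x * y) (hxy : x - y ∈ 𝔭.map (algebraMap A B)) :
    ∃ a : A, algebraMap A B a - x ∈ 𝔭.map (algebraMap A B) := by
  obtain ⟨m', hm'⟩ := hsq (Ideal.Quotient.mk 𝔭 n)
  obtain ⟨m, rfl⟩ := Ideal.Quotient.mk_surjective m'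
  have hmn : m * m - n ∈ 𝔭 := Ideal.Quotient.eq.mp (by rw [map_mul, hm'])
  refine ⟨m, (Ideal.isRadical_iff_pow_one_lt 2 one_lt_two).mp hrad _ ?_⟩
  have key : (algebraMap A B m - x) ^ 2 = algebraMap A B (m * m - n) - x * (x - y)
      + algebraMap A B 2 * (x * x - algebraMap A B m * x) := by
    simp only [map_sub, map_mul, hn, map_ofNat]
    ring
  rw [key]
  exact add_mem (sub_mem (Ideal.mem_map_of_mem _ hmn) (Ideal.mul_mem_left _ _ hxy))
    (Ideal.mul_mem_right _ _ (Ideal.mem_map_of_mem _ h2))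

end Descent

theorem Ideal.Quotient.isSquare_of_two_mem {A : Type*} [CommRing A] {𝔭 : Ideal A}
    [𝔭.IsMaximal] [Finite (A ⧸ 𝔭)] (h2 : (2 : A) ∈ 𝔭) (x : A ⧸ 𝔭) : IsSquare x := by
  let := Ideal.Quotient.field 𝔭
  have : CharP (A ⧸ 𝔭) 2 := CharTwo.of_one_ne_zero_of_two_eq_zero one_ne_zero
    (by rw [← map_ofNat (Ideal.Quotient.mk 𝔭) 2]; exact Ideal.Quotient.eq_zero_iff_mem.mpr h2)
  exact FiniteField.isSquare_of_char_two (ringChar.eq (A ⧸ 𝔭) 2) x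

theorem Ideal.isRadical_of_forall_sq_not_dvd {B : Type*} [CommRing B] [IsDedekindDomain B]
    {I : Ideal B} (hI : I ≠ ⊥) (h : ∀ Q : Ideal B, Q.IsPrime → ¬ Q ^ 2 ∣ I) : I.IsRadical := by
  have hsf : Squarefree I := by
    rw [squarefree_iff_irreducible_sq_not_dvd_of_ne_zero hI]
    intro Q hQ
    rw [← sq]
    exact h Q (Ideal.isPrime_of_prime (UniqueFactorizationMonoid.irreducible_iff_prime.mp hQ))
  refine (Ideal.isRadical_iff_pow_one_lt 2 one_lt_two).mpr fun r hr => ?_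
  rw [← Ideal.dvd_span_singleton, ← hsf.dvd_pow_iff_dvd two_ne_zero, Ideal.span_singleton_pow,
    Ideal.dvd_span_singleton]
  exact hr

theorem smul_smul_of_card_eq_two {G α : Type*} [Group G] [MulAction G α] (hG : Nat.card G = 2)
    (g : G) (b : α) : g • g • b = b := by
  rw [smul_smul, ← sq, ← hG, pow_card_eq_one', one_smul]

section CardTwo

variable {A B G : Type*} [CommRing A] [CommRing B] [Algebra A B] [Group G] [MulSemiringAction G B]
  [Algebra.IsInvariant A B G] {g : G}

theorem exists_algebraMap_eq_of_smul_eq (hG : Nat.card G = 2) (hg : g ≠ 1) {b : B}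
    (hb : g • b = b) : ∃ a : A, algebraMap A B a = b := by
  refine Algebra.IsInvariant.isInvariant (A := A) (G := G) b fun h => ?_
  obtain rfl | hh := eq_or_ne h 1
  · exact one_smul G b
  · rw [(Nat.card_eq_two_iff' 1).mp hG |>.unique hh hg, hb]

theorem exists_algebraMap_eq_add_smul (hG : Nat.card G = 2) (hg : g ≠ 1) (b : B) :
    ∃ a : A, algebraMap A B a = b + g • b :=
  exists_algebraMap_eq_of_smul_eq hG hg <| by
    rw [smul_add, smul_smul_of_card_eq_two hG g, add_comm]

theorem exists_algebraMap_eq_mul_smul (hG : Nat.card G = 2) (hg : g ≠ 1) (b : B) :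
    ∃ a : A, algebraMap A B a = b * g • b :=
  exists_algebraMap_eq_of_smul_eq hG hg <| by
    rw [smul_mul', smul_smul_of_card_eq_two hG g, mul_comm]

end CardTwo

section NumberField

variable {K L : Type*} [Field K] [NumberField K] [Field L] [NumberField L] [Algebra K L]

theorem card_aut_ringOfIntegers_eq_two (hdim : finrank K L = 2) {ψ : 𝓞 L ≃ₐ[𝓞 K] 𝓞 L}
    (hψ : ψ ≠ 1) : Nat.card (𝓞 L ≃ₐ[𝓞 K] 𝓞 L) = 2 := by
  have hcard := Nat.card_congr (galRestrict (𝓞 K) K L (𝓞 L)).toEquiv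
  refine le_antisymm ?_ ?_
  · rw [← hcard, ← hdim, Nat.card_eq_fintype_card]
    exact AlgEquiv.card_le
  · exact Finite.one_lt_card_iff_nontrivial.mpr ⟨⟨ψ, 1, hψ⟩⟩

theorem isGalois_of_aut_ringOfIntegers_ne_one (hdim : finrank K L = 2)
    {ψ : 𝓞 L ≃ₐ[𝓞 K] 𝓞 L} (hψ : ψ ≠ 1) : IsGalois K L := by
  have : FiniteDimensional K L := .of_finrank_eq_succ hdim
  refine IsGalois.of_card_aut_eq_finrank K L ?_
  rw [hdim, ← card_aut_ringOfIntegers_eq_two hdim hψ]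
  exact Nat.card_congr (galRestrict (𝓞 K) K L (𝓞 L)).toEquiv

end NumberField

/-- Let K be a number field, L a quadratic extension of K with nontrivial
automorphism ψ, and 𝔭 a prime of O_K unramified in L. If β ∈ O_L satisfies
β ≡ ψ(β) (mod 𝔭O_L), then there exists β' ∈ O_K with β' ≡ β (mod 𝔭O_L). -/
theorem descend_congruent (K L : Type*) [Field K] [NumberField K]
    [Field L] [NumberField L] [Algebra K L] (hdim : finrank K L = 2)
    (ψ : (𝓞 L) ≃ₐ[𝓞 K] (𝓞 L)) (hψ : ψ ≠ AlgEquiv.refl)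
    (𝔭 : Ideal (𝓞 K)) (h𝔭 : 𝔭.IsPrime) (h𝔭0 : 𝔭 ≠ ⊥)
    (hur : ∀ 𝔔 : Ideal (𝓞 L), 𝔔.IsPrime →
      ¬ 𝔔 ^ 2 ∣ Ideal.map (algebraMap (𝓞 K) (𝓞 L)) 𝔭)
    (β : 𝓞 L)
    (hβ : β - ψ β ∈ Ideal.map (algebraMap (𝓞 K) (𝓞 L)) 𝔭) :
    ∃ β' : 𝓞 K,
      algebraMap (𝓞 K) (𝓞 L) β' - β ∈ Ideal.map (algebraMap (𝓞 K) (𝓞 L)) 𝔭 := by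
  have hcard := card_aut_ringOfIntegers_eq_two hdim hψ
  have : FiniteDimensional K L := .of_finrank_eq_succ hdim
  have := isGalois_of_aut_ringOfIntegers_ne_one hdim hψ
  have := Algebra.isInvariant_of_isGalois' (𝓞 K) K L (𝓞 L)
  have : 𝔭.IsMaximal := h𝔭.isMaximal h𝔭0
  by_cases h2 : (2 : 𝓞 K) ∈ 𝔭
  · have h𝔭L : 𝔭.map (algebraMap (𝓞 K) (𝓞 L)) ≠ ⊥ :=
      (Ideal.map_eq_bot_iff_of_injective (FaithfulSMul.algebraMap_injective _ _)).not.mpr h𝔭0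
    obtain ⟨n, hn⟩ := exists_algebraMap_eq_mul_smul (A := 𝓞 K) hcard hψ β
    exact exists_algebraMap_sub_mem_of_two_mem h2 (Ideal.Quotient.isSquare_of_two_mem h2)
      (Ideal.isRadical_of_forall_sq_not_dvd h𝔭L hur) hn hβ
  · obtain ⟨t, ht⟩ := exists_algebraMap_eq_add_smul (A := 𝓞 K) hcard hψ β
    exact exists_algebraMap_sub_mem_of_two_notMem h2 ht hβ
end

section
/- Let K be a number field, 𝔭 an odd prime of O_K, and L a quadratic extension of K containing Q(i) such that 𝔭 splits in L, with nontrivial automorphism ψ of L/K. If ψ fixes Q(i), then for all α ∈ O_K one has (α / 𝔭O_L)_{L,4} = (α / 𝔭)_{K,2}; and if ψ does not fix Q(i), then for all α ∈ O_K with 𝔭 ∤ α one has (α / 𝔭O_L)_{L,4} = 1. -/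
/-!
Since `𝔭 O_L = 𝔔 · ψ(𝔔)` and `N(𝔭 O_L) = N(𝔭)²`, both `𝔔` and `ψ(𝔔)` have norm `q = N(𝔭)`, and
`q ≡ 1 (mod 4)` because `-1 = i²` is a square modulo `𝔔`. The fourth roots of unity `±1, ±i`
stay distinct modulo any prime not above `2`, so applying `ψ` to the congruence
`(α/𝔔)₄ ≡ α^((q-1)/4) (mod 𝔔)` gives `(α/ψ(𝔔))₄ = ψ((α/𝔔)₄)`. If `ψ` fixes `i`, it fixes
all fourth roots of unity and the product is `(α/𝔔)₄² ≡ α^((q-1)/2) ≡ (α/𝔭)₂ (mod 𝔔)`;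
otherwise `ψ(i) = -i`, so `ψ` inverts the fourth roots of unity and the product is `1`.
-/

open NumberField Module Classical

/-- The n-th power residue symbol: the (unique, when it exists) n-th root of
unity congruent to α^((N(I)-1)/n) modulo I, and 0 otherwise. -/
noncomputable def residueSymbol {R : Type*} [CommRing R] [IsDedekindDomain R]
    [Module.Free ℤ R] [Module.Finite ℤ R] (n : ℕ) (α : R) (I : Ideal R) : R :=
  if h : ∃ ζ : R, ζ ^ n = 1 ∧ ζ - α ^ ((Ideal.absNorm I - 1) / n) ∈ I then
    h.choose
  else 0

section PowFour

variable {R : Type*} [CommRing R] {j x z : R}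

lemma pow_four_sub_one_eq_mul (hj : j ^ 2 = -1) (x : R) :
    x ^ 4 - 1 = (x - 1) * (x + 1) * ((x - j) * (x + j)) := by
  linear_combination (x ^ 2 - 1) * hj

lemma sub_mem_or_of_pow_four_sub_one_mem {I : Ideal R} [I.IsPrime] (hj : j ^ 2 = -1)
    (hx : x ^ 4 - 1 ∈ I) : x - 1 ∈ I ∨ x + 1 ∈ I ∨ x - j ∈ I ∨ x + j ∈ I := by
  rw [pow_four_sub_one_eq_mul hj] at hx
  rcases Ideal.IsPrime.mem_or_mem ‹_› hx with h | h
  · rcases Ideal.IsPrime.mem_or_mem ‹_› h with h | h <;> tauto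
  · rcases Ideal.IsPrime.mem_or_mem ‹_› h with h | h <;> tauto

lemma exists_pow_four_eq_one_sub_mem {I : Ideal R} [I.IsPrime] (hj : j ^ 2 = -1)
    (hx : x ^ 4 - 1 ∈ I) : ∃ ζ : R, ζ ^ 4 = 1 ∧ ζ - x ∈ I := by
  have hj4 : j ^ 4 = 1 := by linear_combination (j ^ 2 - 1) * hj
  rcases sub_mem_or_of_pow_four_sub_one_mem hj hx with h | h | h | h
  · exact ⟨1, one_pow 4, by convert I.neg_mem h using 1; ring⟩
  · exact ⟨-1, by norm_num, by convert I.neg_mem h using 1; ring⟩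
  · exact ⟨j, hj4, by convert I.neg_mem h using 1; ring⟩
  · exact ⟨-j, by rw [neg_pow, hj4]; norm_num, by convert I.neg_mem h using 1; ring⟩

lemma eq_or_eq_of_pow_four_eq_one [IsDomain R] (hj : j ^ 2 = -1) (hz : z ^ 4 = 1) :
    z = 1 ∨ z = -1 ∨ z = j ∨ z = -j := by
  have := sub_mem_or_of_pow_four_sub_one_mem (I := ⊥) (x := z) hj (by simp [hz])
  simpa only [Ideal.mem_bot, sub_eq_zero, add_eq_zero_iff_eq_neg] using this

lemma injOn_quotient_mk_pow_four_eq_one [IsDomain R] (hj : j ^ 2 = -1) {I : Ideal R}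
    (h2 : (2 : R) ∉ I) : Set.InjOn (Ideal.Quotient.mk I) {z : R | z ^ 4 = 1} := by
  intro z (hz : z ^ 4 = 1) w (hw : w ^ 4 = 1) hzw
  rw [Ideal.Quotient.eq] at hzw
  -- `δ = z / w` is a fourth root of unity with `δ ≡ 1`; `1 - δ` divides `2` unless `δ = 1`
  set δ := z * w ^ 3
  have hδ : δ - 1 ∈ I := by
    convert I.mul_mem_right (w ^ 3) hzw using 1
    linear_combination hw
  have hzδ : z = δ * w := by linear_combination (-z) * hw
  have hδ4 : δ ^ 4 = 1 := by
    calc δ ^ 4 = z ^ 4 * (w ^ 4) ^ 3 := by ring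
      _ = 1 := by rw [hz, hw]; ring
  rcases eq_or_eq_of_pow_four_eq_one hj hδ4 with h | h | h | h
  · rw [hzδ, h, one_mul]
  · refine absurd ?_ h2
    convert I.neg_mem hδ using 1
    rw [h]; ring
  all_goals
    refine absurd ?_ h2
    convert I.mul_mem_right (-(δ + 1)) hδ using 1
    rw [h]; linear_combination hj

lemma map_eq_self_of_pow_four_eq_one [IsDomain R] {F : Type*} [FunLike F R R]
    [RingHomClass F R R] (hj : j ^ 2 = -1) (σ : F) (hσ : σ j = j) (hz : z ^ 4 = 1) :
    σ z = z := by
  rcases eq_or_eq_of_pow_four_eq_one hj hz with rfl | rfl | rfl | rfl <;> simp [hσ]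

lemma mul_map_eq_one_of_pow_four_eq_one [IsDomain R] {F : Type*} [FunLike F R R]
    [RingHomClass F R R] (hj : j ^ 2 = -1) (σ : F) (hσ : σ j ≠ j) (hz : z ^ 4 = 1) :
    z * σ z = 1 := by
  have hσj : σ j = -j := by
    have hσj2 : σ j ^ 2 = -1 := by rw [← map_pow, hj, map_neg, map_one]
    have : (σ j - j) * (σ j + j) = 0 := by linear_combination hσj2 - hj
    simpa [sub_eq_zero, hσ, add_eq_zero_iff_eq_neg] using this
  rcases eq_or_eq_of_pow_four_eq_one hj hz with rfl | rfl | rfl | rfl <;> simp [hσj] <;>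
    linear_combination -hj

end PowFour

lemma exists_sq_eq_one_sub_mem {R : Type*} [CommRing R] {I : Ideal R} [I.IsPrime] {x : R}
    (hx : x ^ 2 - 1 ∈ I) : ∃ η : R, η ^ 2 = 1 ∧ η - x ∈ I := by
  rw [show x ^ 2 - 1 = (x - 1) * (x + 1) by ring] at hx
  rcases Ideal.IsPrime.mem_or_mem ‹_› hx with h | h
  · exact ⟨1, one_pow 2, by convert I.neg_mem h using 1; ring⟩
  · exact ⟨-1, by norm_num, by convert I.neg_mem h using 1; ring⟩

section ResidueSymbol

variable {R : Type*} [CommRing R] [IsDedekindDomain R] [Module.Free ℤ R] {n : ℕ} {α ζ : R}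
  {I : Ideal R}

lemma Ideal.absNorm_map_ringEquiv (σ : R ≃+* R) (I : Ideal R) :
    Ideal.absNorm (I.map (σ : R →+* R)) = Ideal.absNorm I := by
  simp only [Ideal.absNorm_apply, Submodule.cardQuot_apply]
  exact (Nat.card_congr (Ideal.quotientEquiv I _ σ rfl).toEquiv).symm

lemma pow_absNorm_sub_one_sub_one_mem (hI : I.IsMaximal) (hα : α ∉ I) :
    α ^ (Ideal.absNorm I - 1) - 1 ∈ I := by
  let _ := Ideal.Quotient.field I
  rw [← Ideal.Quotient.eq_zero_iff_mem, map_sub, map_pow, map_one, sub_eq_zero,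
    Ideal.absNorm_apply, Submodule.cardQuot_apply]
  cases finite_or_infinite (R ⧸ I)
  · let _ := Fintype.ofFinite (R ⧸ I)
    rw [Nat.card_eq_fintype_card]
    exact FiniteField.pow_card_sub_one_eq_one _
      (by rwa [ne_eq, Ideal.Quotient.eq_zero_iff_mem])
  · rw [Nat.card_eq_zero_of_infinite, zero_tsub, pow_zero]

lemma exists_pow_eq_one_sub_pow_mem (hI : I.IsMaximal) (hn : n ∣ Ideal.absNorm I - 1)
    (hα : α ∉ I) (hroots : ∀ x : R, x ^ n - 1 ∈ I → ∃ ζ : R, ζ ^ n = 1 ∧ ζ - x ∈ I) :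
    ∃ ζ : R, ζ ^ n = 1 ∧ ζ - α ^ ((Ideal.absNorm I - 1) / n) ∈ I :=
  hroots _ <| by
    rw [← pow_mul, Nat.div_mul_cancel hn]
    exact pow_absNorm_sub_one_sub_one_mem hI hα

variable [Module.Finite ℤ R]

lemma residueSymbol_spec (h : ∃ ζ : R, ζ ^ n = 1 ∧ ζ - α ^ ((Ideal.absNorm I - 1) / n) ∈ I) :
    residueSymbol n α I ^ n = 1 ∧
      residueSymbol n α I - α ^ ((Ideal.absNorm I - 1) / n) ∈ I := by
  rw [residueSymbol, dif_pos h]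
  exact h.choose_spec

lemma residueSymbol_eq_of_sub_mem
    (hinj : Set.InjOn (Ideal.Quotient.mk I) {z : R | z ^ n = 1}) (hζ : ζ ^ n = 1)
    (h : ζ - α ^ ((Ideal.absNorm I - 1) / n) ∈ I) : residueSymbol n α I = ζ := by
  obtain ⟨h1, h2⟩ := residueSymbol_spec ⟨ζ, hζ, h⟩
  exact hinj h1 hζ (Ideal.Quotient.eq.2 (by simpa using I.sub_mem h2 h))

lemma residueSymbol_eq_zero_of_mem (hα : α ∈ I) (hI : I ≠ ⊤) (hn : 0 < n)
    (hnI : n ≤ Ideal.absNorm I - 1) : residueSymbol n α I = 0 := by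
  rw [residueSymbol, dif_neg]
  rintro ⟨ζ, hζ, h⟩
  have hαm : α ^ ((Ideal.absNorm I - 1) / n) ∈ I :=
    I.pow_mem_of_mem hα _ (Nat.div_pos hnI hn)
  have hζI : ζ ∈ I := by simpa using I.add_mem h hαm
  exact hI (I.eq_top_iff_one.2 (hζ ▸ I.pow_mem_of_mem hζI n hn))

lemma residueSymbol_map_ringEquiv (σ : R ≃+* R)
    (hinj : Set.InjOn (Ideal.Quotient.mk (I.map (σ : R →+* R))) {z : R | z ^ n = 1})
    (hex : ∃ ζ : R, ζ ^ n = 1 ∧ ζ - α ^ ((Ideal.absNorm I - 1) / n) ∈ I) :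
    residueSymbol n (σ α) (I.map (σ : R →+* R)) = σ (residueSymbol n α I) := by
  obtain ⟨h1, h2⟩ := residueSymbol_spec hex
  refine residueSymbol_eq_of_sub_mem hinj (by rw [← map_pow, h1, map_one]) ?_
  rw [Ideal.absNorm_map_ringEquiv, ← map_pow, ← map_sub]
  exact Ideal.mem_map_of_mem _ h2

end ResidueSymbol

section OddPrime

variable {R : Type*} [CommRing R] [IsDedekindDomain R] [Module.Free ℤ R] {I : Ideal R}

lemma Ideal.IsPrime.isMaximal_of_odd_absNorm (hI : I.IsPrime) (hodd : Odd (Ideal.absNorm I)) :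
    I.IsMaximal :=
  hI.isMaximal (by rintro rfl; simp at hodd)

lemma two_notMem_of_odd_absNorm (hI : I ≠ ⊤) (hodd : Odd (Ideal.absNorm I)) :
    (2 : R) ∉ I := by
  obtain ⟨m, hm⟩ := hodd
  intro h2
  refine hI (I.eq_top_iff_one.2 ?_)
  convert I.sub_mem (Ideal.absNorm_mem I) (I.mul_mem_left (m : R) h2) using 1
  rw [hm]; push_cast; ring

lemma four_dvd_absNorm_sub_one (hI : I.IsPrime) (hodd : Odd (Ideal.absNorm I)) {j : R}
    (hj : j ^ 2 = -1) : 4 ∣ Ideal.absNorm I - 1 := by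
  have := hI.isMaximal_of_odd_absNorm hodd
  let _ := Ideal.Quotient.field I
  have : Finite (R ⧸ I) := (Ideal.absNorm_ne_zero_iff I).1 (by rintro h; simp [h] at hodd)
  let _ := Fintype.ofFinite (R ⧸ I)
  have hsq : IsSquare (-1 : R ⧸ I) :=
    ⟨Ideal.Quotient.mk I j, by rw [← map_mul, ← sq, hj, map_neg, map_one]⟩
  have hcard : Fintype.card (R ⧸ I) = Ideal.absNorm I := by
    rw [← Nat.card_eq_fintype_card, Ideal.absNorm_apply, Submodule.cardQuot_apply]
  have := FiniteField.isSquare_neg_one_iff.1 hsq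
  rw [hcard] at this
  obtain ⟨m, hm⟩ := hodd
  omega

variable {j β : R}

lemma exists_pow_four_eq_one_sub_pow_mem (hI : I.IsPrime) (hodd : Odd (Ideal.absNorm I))
    (hj : j ^ 2 = -1) (hβ : β ∉ I) :
    ∃ ζ : R, ζ ^ 4 = 1 ∧ ζ - β ^ ((Ideal.absNorm I - 1) / 4) ∈ I :=
  exists_pow_eq_one_sub_pow_mem (hI.isMaximal_of_odd_absNorm hodd)
    (four_dvd_absNorm_sub_one hI hodd hj) hβ fun _ hx ↦ exists_pow_four_eq_one_sub_mem hj hx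

variable [Module.Finite ℤ R]

lemma residueSymbol_eq_zero_of_mem_of_odd {n : ℕ} (hβ : β ∈ I) (hI : I ≠ ⊤)
    (hodd : Odd (Ideal.absNorm I)) (hn : 0 < n) (hnI : n ∣ Ideal.absNorm I - 1) :
    residueSymbol n β I = 0 := by
  have hI1 := Ideal.absNorm_eq_one_iff.not.2 hI
  obtain ⟨m, hm⟩ := hodd
  exact residueSymbol_eq_zero_of_mem hβ hI hn (Nat.le_of_dvd (by omega) hnI)

lemma residueSymbol_four_map_ringEquiv (σ : R ≃+* R) (hI : I.IsPrime)
    (hodd : Odd (Ideal.absNorm I)) (hj : j ^ 2 = -1) (hβ : β ∉ I) :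
    residueSymbol 4 (σ β) (I.map (σ : R →+* R)) = σ (residueSymbol 4 β I) := by
  have hσI : I.map (σ : R →+* R) ≠ ⊤ := (Ideal.map_isPrime_of_equiv σ (I := I)).ne_top
  refine residueSymbol_map_ringEquiv σ (injOn_quotient_mk_pow_four_eq_one hj ?_)
    (exists_pow_four_eq_one_sub_pow_mem hI hodd hj hβ)
  exact two_notMem_of_odd_absNorm hσI (by rwa [Ideal.absNorm_map_ringEquiv])

end OddPrime

lemma sq_eq_map_residueSymbol_two {R S : Type*} [CommRing R] [IsDedekindDomain R]
    [Module.Free ℤ R] [Module.Finite ℤ R] [CommRing S] (f : R →+* S) {𝔭 : Ideal R}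
    {P : Ideal S} (h𝔭 : 𝔭.IsMaximal) (hle : 𝔭 ≤ P.comap f)
    (hinj : Set.InjOn (Ideal.Quotient.mk P) {z : S | z ^ 4 = 1})
    (h4 : 4 ∣ Ideal.absNorm 𝔭 - 1) {α : R} (hα : α ∉ 𝔭) {ζ : S} (hζ : ζ ^ 4 = 1)
    (hmem : ζ - f α ^ ((Ideal.absNorm 𝔭 - 1) / 4) ∈ P) :
    ζ ^ 2 = f (residueSymbol 2 α 𝔭) := by
  set m := (Ideal.absNorm 𝔭 - 1) / 4
  have hm : (Ideal.absNorm 𝔭 - 1) / 2 = m * 2 := by omega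
  obtain ⟨hη, hηmem⟩ := residueSymbol_spec <| exists_pow_eq_one_sub_pow_mem h𝔭
    (dvd_trans (by norm_num) h4) hα fun _ hx ↦ exists_sq_eq_one_sub_mem hx
  rw [hm] at hηmem
  have hζ2 : (ζ ^ 2) ^ 4 = 1 := by rw [← pow_mul, mul_comm, pow_mul, hζ, one_pow]
  have hη4 : f (residueSymbol 2 α 𝔭) ^ 4 = 1 := by
    rw [← map_pow, show 4 = 2 * 2 from rfl, pow_mul, hη, one_pow, map_one]
  refine hinj hζ2 hη4 (Ideal.Quotient.eq.2 ?_)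
  have hηP : f (residueSymbol 2 α 𝔭 - α ^ (m * 2)) ∈ P := hle hηmem
  convert P.sub_mem (P.mul_mem_right (ζ + f α ^ m) hmem) hηP using 1
  simp only [map_sub, map_pow]
  ring

lemma absNorm_eq_of_map_eq_mul_map {K L : Type*} [Field K] [NumberField K] [Field L]
    [NumberField L] [Algebra K L] (hdim : finrank K L = 2) (σ : 𝓞 L ≃+* 𝓞 L)
    {𝔭 : Ideal (𝓞 K)} {𝔔 : Ideal (𝓞 L)}
    (hsplit : 𝔭.map (algebraMap (𝓞 K) (𝓞 L)) = 𝔔 * 𝔔.map (σ : 𝓞 L →+* 𝓞 L)) :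
    Ideal.absNorm 𝔔 = Ideal.absNorm 𝔭 := by
  have h := congrArg Ideal.absNorm hsplit
  rw [Ideal.absNorm_algebraMap, ← IsFractionRing.finrank_eq (𝓞 K) K (𝓞 L) L, hdim, map_mul,
    Ideal.absNorm_map_ringEquiv, ← sq] at h
  exact (Nat.pow_left_injective two_ne_zero h).symm

theorem quartic_symbol_split_general (K L : Type*) [Field K] [NumberField K]
    [Field L] [NumberField L] [Algebra K L] (hdim : finrank K L = 2)
    (i : 𝓞 L) (hi : i ^ 2 = -1)
    (ψ : (𝓞 L) ≃ₐ[𝓞 K] (𝓞 L))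
    (𝔭 : Ideal (𝓞 K)) (h𝔭 : 𝔭.IsPrime) (hodd : Odd (Ideal.absNorm 𝔭))
    (𝔔 : Ideal (𝓞 L)) (h𝔔 : 𝔔.IsPrime)
    (hsplit : Ideal.map (algebraMap (𝓞 K) (𝓞 L)) 𝔭 =
      𝔔 * Ideal.map (ψ : 𝓞 L →+* 𝓞 L) 𝔔) :
    (ψ i = i →
      ∀ α : 𝓞 K,
        residueSymbol 4 (algebraMap (𝓞 K) (𝓞 L) α) 𝔔 *
            residueSymbol 4 (algebraMap (𝓞 K) (𝓞 L) α)
              (Ideal.map (ψ : 𝓞 L →+* 𝓞 L) 𝔔) =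
          algebraMap (𝓞 K) (𝓞 L) (residueSymbol 2 α 𝔭)) ∧
    (ψ i ≠ i →
      ∀ α : 𝓞 K, α ∉ 𝔭 →
        residueSymbol 4 (algebraMap (𝓞 K) (𝓞 L) α) 𝔔 *
            residueSymbol 4 (algebraMap (𝓞 K) (𝓞 L) α)
              (Ideal.map (ψ : 𝓞 L →+* 𝓞 L) 𝔔) = 1) := by
  set f := algebraMap (𝓞 K) (𝓞 L)
  have hq : Ideal.absNorm 𝔔 = Ideal.absNorm 𝔭 :=
    absNorm_eq_of_map_eq_mul_map hdim ψ.toRingEquiv hsplit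
  have hodd𝔔 : Odd (Ideal.absNorm 𝔔) := hq ▸ hodd
  have h4 : 4 ∣ Ideal.absNorm 𝔭 - 1 := hq ▸ four_dvd_absNorm_sub_one h𝔔 hodd𝔔 hi
  have h𝔭max := h𝔭.isMaximal_of_odd_absNorm hodd
  have hcomap : 𝔔.comap f = 𝔭 := (h𝔭max.eq_of_le (Ideal.IsPrime.comap f).ne_top
    (Ideal.map_le_iff_le_comap.1 (hsplit ▸ Ideal.mul_le_left))).symm
  have hnotMem : ∀ α ∉ 𝔭, f α ∉ 𝔔 := fun α hα h ↦ hα (hcomap ▸ h)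
  have hψ : ∀ α ∉ 𝔭, residueSymbol 4 (f α) (𝔔.map (ψ : 𝓞 L →+* 𝓞 L)) =
      ψ (residueSymbol 4 (f α) 𝔔) := fun α hα ↦ by
    simpa [f] using residueSymbol_four_map_ringEquiv ψ.toRingEquiv h𝔔 hodd𝔔 hi (hnotMem α hα)
  have hspec := fun α hα ↦
    residueSymbol_spec (exists_pow_four_eq_one_sub_pow_mem h𝔔 hodd𝔔 hi (hnotMem α hα))
  refine ⟨fun hfix α ↦ ?_, fun hnfix α hα ↦ ?_⟩
  · by_cases hα : α ∈ 𝔭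
    · rw [residueSymbol_eq_zero_of_mem_of_odd (show f α ∈ 𝔔 from hcomap.ge hα) h𝔔.ne_top
        hodd𝔔 four_pos (hq ▸ h4), zero_mul, residueSymbol_eq_zero_of_mem_of_odd hα h𝔭.ne_top
        hodd two_pos (dvd_trans (by norm_num) h4), map_zero]
    · obtain ⟨hζ, hmem⟩ := hspec α hα
      rw [hψ α hα, map_eq_self_of_pow_four_eq_one hi ψ hfix hζ, ← sq]
      exact sq_eq_map_residueSymbol_two f h𝔭max hcomap.ge
        (injOn_quotient_mk_pow_four_eq_one hi (two_notMem_of_odd_absNorm h𝔔.ne_top hodd𝔔))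
        h4 hα hζ (hq ▸ hmem)
  · rw [hψ α hα]
    exact mul_map_eq_one_of_pow_four_eq_one hi ψ hnfix (hspec α hα).1

/-- Let K be a number field, 𝔭 an odd prime of O_K, and L a quadratic
extension of K containing Q(i) in which 𝔭 splits as 𝔔·ψ(𝔔) with 𝔔 ≠ ψ(𝔔),
where ψ is the nontrivial automorphism of L/K. The quartic symbol at 𝔭O_L is
the product of the symbols at 𝔔 and ψ(𝔔). If ψ fixes Q(i), this quartic
symbol equals the quadratic symbol (α/𝔭)_{K,2} for all α ∈ O_K; if ψ does not
fix Q(i), it equals 1 for all α ∈ O_K with 𝔭 ∤ α. -/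
theorem quartic_symbol_split (K L : Type*) [Field K] [NumberField K]
    [Field L] [NumberField L] [Algebra K L] (hdim : finrank K L = 2)
    (i : 𝓞 L) (hi : i ^ 2 = -1)
    (ψ : (𝓞 L) ≃ₐ[𝓞 K] (𝓞 L)) (hψ : ψ ≠ AlgEquiv.refl)
    (𝔭 : Ideal (𝓞 K)) (h𝔭 : 𝔭.IsPrime) (hodd : Odd (Ideal.absNorm 𝔭))
    (𝔔 : Ideal (𝓞 L)) (h𝔔 : 𝔔.IsPrime)
    (hsplit : Ideal.map (algebraMap (𝓞 K) (𝓞 L)) 𝔭 =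
      𝔔 * Ideal.map (ψ : 𝓞 L →+* 𝓞 L) 𝔔)
    (hne : 𝔔 ≠ Ideal.map (ψ : 𝓞 L →+* 𝓞 L) 𝔔) :
    (ψ i = i →
      ∀ α : 𝓞 K,
        residueSymbol 4 (algebraMap (𝓞 K) (𝓞 L) α) 𝔔 *
            residueSymbol 4 (algebraMap (𝓞 K) (𝓞 L) α)
              (Ideal.map (ψ : 𝓞 L →+* 𝓞 L) 𝔔) =
          algebraMap (𝓞 K) (𝓞 L) (residueSymbol 2 α 𝔭)) ∧
    (ψ i ≠ i →
      ∀ α : 𝓞 K, α ∉ 𝔭 →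
        residueSymbol 4 (algebraMap (𝓞 K) (𝓞 L) α) 𝔔 *
            residueSymbol 4 (algebraMap (𝓞 K) (𝓞 L) α)
              (Ideal.map (ψ : 𝓞 L →+* 𝓞 L) 𝔔) = 1) :=
  quartic_symbol_split_general K L hdim i hi ψ 𝔭 h𝔭 hodd 𝔔 h𝔔 hsplit
end

section
/- For q = 19, the element ε₁₉ = (1/2)(1 + i)(3√19 + 13) is a unit of the ring of integers of M₁₉ = Q(i, √19). -/
/-!
Write `ε(i, s) = (1 + i)(3s + 13)/2`. Squaring gives `ε² = i(170 + 39s)`, which lies in `ℤ[i, s]`,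
so `ε` is integral; the conjugate `ε(-i, -s)` is integral for the same reason, and
`ε(i, s) ε(-i, -s) = -(1 + i)(1 - i)(9s² - 169)/4 = -1` because `(3√19)² - 13² = 2`.
-/

open NumberField Module

section

variable {K : Type*} [Field K]

theorem isIntegral_of_sq_eq_intCast {x : K} {m : ℤ} (h : x ^ 2 = m) : IsIntegral ℤ x :=
  IsIntegral.of_pow two_pos (h ▸ isIntegral_intCast m)

def eps19 (i s : K) : K := (1 + i) * (3 * s + 13) / 2

variable [NeZero (2 : K)] {i s : K}

theorem eps19_sq (hi : i ^ 2 = -1) (hs : s ^ 2 = 19) : eps19 i s ^ 2 = i * (170 + 39 * s) := by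
  rw [eps19, div_pow, div_eq_iff (pow_ne_zero 2 two_ne_zero)]
  linear_combination (18 * i) * hs + (9 * s ^ 2 + 78 * s + 169) * hi

theorem isIntegral_eps19 (hi : i ^ 2 = -1) (hs : s ^ 2 = 19) : IsIntegral ℤ (eps19 i s) := by
  have hi_int : IsIntegral ℤ i := isIntegral_of_sq_eq_intCast (m := -1) (by simpa using hi)
  have hs_int : IsIntegral ℤ s := isIntegral_of_sq_eq_intCast (m := 19) (by simpa using hs)
  refine IsIntegral.of_pow two_pos ?_
  rw [eps19_sq hi hs]
  exact hi_int.mul ((isIntegral_natCast 170).add ((isIntegral_natCast 39).mul hs_int))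

theorem eps19_mul_eps19_neg (hi : i ^ 2 = -1) (hs : s ^ 2 = 19) :
    eps19 i s * eps19 (-i) (-s) = -1 := by
  rw [eps19, eps19, div_mul_div_comm, div_eq_iff (mul_ne_zero two_ne_zero two_ne_zero)]
  linear_combination (-18 : K) * hs + (9 * s ^ 2 - 169) * hi

end

theorem eps19_is_unit_general (K : Type*) [Field K] [NumberField K]
    (i s : K) (hi : i ^ 2 = -1) (hs : s ^ 2 = 19) :
    ∃ ε : (𝓞 K)ˣ, ((ε : 𝓞 K) : K) = (1 + i) * (3 * s + 13) / 2 := by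
  have hi' : (-i) ^ 2 = -1 := by rw [neg_sq, hi]
  have hs' : (-s) ^ 2 = 19 := by rw [neg_sq, hs]
  let ε : 𝓞 K := ⟨eps19 i s, isIntegral_eps19 hi hs⟩
  let ε' : 𝓞 K := ⟨eps19 (-i) (-s), isIntegral_eps19 hi' hs'⟩
  have hεε' : ε * -ε' = 1 :=
    RingOfIntegers.ext <| by
      push_cast [mul_neg]
      exact neg_eq_iff_eq_neg.mpr (eps19_mul_eps19_neg hi hs)
  exact ⟨Units.mkOfMulEqOne ε (-ε') hεε', rfl⟩

/-- ε₁₉ = (1/2)(1 + i)(3√19 + 13) is a unit of the ring of integers of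
M₁₉ = Q(i, √19). -/
theorem eps19_is_unit (K : Type*) [Field K] [NumberField K]
    (hdim : finrank ℚ K = 4) (i s : K) (hi : i ^ 2 = -1) (hs : s ^ 2 = 19) :
    ∃ ε : (𝓞 K)ˣ, ((ε : 𝓞 K) : K) = (1 + i) * (3 * s + 13) / 2 :=
  eps19_is_unit_general K i s hi hs
end
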